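/- arXiv:2402.14931 — 3 statements merged into one kernel-verified Lean document; each statement's English description precedes it below -/
import Mathlib

section
/- A lattice L is not distributive if and only if there exists an injective lattice homomorphism from the pentagon N5 into L or an injective lattice homomorphism from the diamond M3 into L. -/
/-- The pentagon lattice `N₅`. -/
inductive N5 : Type
  | bot | v | u | w | top
  deriving DecidableEq

instance : Fintype N5 := ⟨{.bot, .v, .u, .w, .top}, by intro x; cases x <;> simp⟩

namespace N5

def ble : N5 → N5 → Bool
  | .bot, _ => true
  | _, .top => true
  | .v, .v => true
  | .v, .u => true
  | .u, .u => true
  | .w, .w => true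
  | _, _ => false

instance : Max N5 := ⟨fun a b => if a.ble b then b else if b.ble a then a else .top⟩
instance : Min N5 := ⟨fun a b => if a.ble b then a else if b.ble a then b else .bot⟩

instance : Lattice N5 :=
  Lattice.mk' (by decide) (by decide) (by decide) (by decide) (by decide) (by decide)

end N5

/-- The diamond lattice `M₃`: atoms `a`, `b`, `c` pairwise incomparable with
pairwise meets `0` and pairwise joins `1`. -/
inductive M3 : Type
  | bot | a | b | c | top
  deriving DecidableEq

instance : Fintype M3 := ⟨{.bot, .a, .b, .c, .top}, by intro x; cases x <;> simp⟩

namespace M3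

def ble : M3 → M3 → Bool
  | .bot, _ => true
  | _, .top => true
  | .a, .a => true
  | .b, .b => true
  | .c, .c => true
  | _, _ => false

instance : Max M3 := ⟨fun x y => if x.ble y then y else if y.ble x then x else .top⟩
instance : Min M3 := ⟨fun x y => if x.ble y then x else if y.ble x then y else .bot⟩

instance : Lattice M3 :=
  Lattice.mk' (by decide) (by decide) (by decide) (by decide) (by decide) (by decide)

end M3

/-!
A non-modular lattice contains a pentagon outright: if `x ≤ z` and `(x ⊔ y) ⊓ z ≰ x ⊔ y ⊓ z`,
then `x ⊔ y ⊓ z < (x ⊔ y) ⊓ z` and `y` generate one. In a modular lattice failing distributivity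
at `x, y, z`, the lower median `d` and the upper median `e` of `x, y, z` differ, and
`(x ⊓ e) ⊔ d`, `(y ⊓ e) ⊔ d`, `(z ⊓ e) ⊔ d` have pairwise meet `d` and pairwise join `e`.
Both maps are injective because every nontrivial congruence of `M₃` collapses `0` with `1`, and
every nontrivial congruence of `N₅` collapses `v` with `u`.
-/

namespace LatticeHom

variable {α β : Type*} [Lattice α] [Lattice β] (f : LatticeHom α β) {p q r s : α}

theorem map_sup_congr (h₁ : f p = f q) (h₂ : f r = f s) : f (p ⊔ r) = f (q ⊔ s) := by
  rw [map_sup, map_sup, h₁, h₂]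

theorem map_inf_congr (h₁ : f p = f q) (h₂ : f r = f s) : f (p ⊓ r) = f (q ⊓ s) := by
  rw [map_inf, map_inf, h₁, h₂]

theorem map_sup_congr_right (h : f p = f q) (r : α) : f (p ⊔ r) = f (q ⊔ r) :=
  f.map_sup_congr h rfl

theorem map_inf_congr_right (h : f p = f q) (r : α) : f (p ⊓ r) = f (q ⊓ r) :=
  f.map_inf_congr h rfl

theorem map_inf_eq_map_sup (h : f p = f q) : f (p ⊓ q) = f (p ⊔ q) := by
  rw [map_inf, map_sup, h, inf_idem, sup_idem]

theorem inf_sup_left_of_injective (hf : Function.Injective f)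
    (h : ∀ x y z : β, x ⊓ (y ⊔ z) = x ⊓ y ⊔ x ⊓ z) (x y z : α) :
    x ⊓ (y ⊔ z) = x ⊓ y ⊔ x ⊓ z :=
  hf (by simp only [map_inf, map_sup, h])

end LatticeHom

theorem Monotone.eq_of_eq_of_le {α β : Type*} [Preorder α] [PartialOrder β] {f : α → β}
    (hf : Monotone f) {a b c d : α} (h : f a = f d) (hab : a ≤ b) (hbc : b ≤ c) (hcd : c ≤ d) :
    f b = f c :=
  le_antisymm (hf hbc) <| calc
    f c ≤ f d := hf hcd
    _ = f a := h.symm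
    _ ≤ f b := hf hab

section Median

variable {α : Type*} [Lattice α] (x y z : α)

def lowerMedian : α := x ⊓ y ⊔ y ⊓ z ⊔ z ⊓ x

def upperMedian : α := (x ⊔ y) ⊓ (y ⊔ z) ⊓ (z ⊔ x)

theorem lowerMedian_rotate : lowerMedian y z x = lowerMedian x y z := by
  simp only [lowerMedian]; ac_rfl

theorem upperMedian_rotate : upperMedian y z x = upperMedian x y z := by
  simp only [upperMedian]; ac_rfl

theorem lowerMedian_le_upperMedian : lowerMedian x y z ≤ upperMedian x y z := by
  simp [lowerMedian, upperMedian, le_sup_of_le_right]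

theorem inf_upperMedian : x ⊓ upperMedian x y z = x ⊓ (y ⊔ z) := by
  simp [upperMedian, ← inf_assoc]

theorem sup_lowerMedian : x ⊔ lowerMedian x y z = x ⊔ y ⊓ z :=
  inf_upperMedian (α := αᵒᵈ) x y z

def diamondAtom : α := x ⊓ upperMedian x y z ⊔ lowerMedian x y z

variable [IsModularLattice α]

theorem sup_inf_inf_sup_inf_eq_lowerMedian :
    (x ⊔ y ⊓ z) ⊓ (y ⊔ z ⊓ x) = lowerMedian x y z := by
  have hy : y ⊓ (x ⊔ y ⊓ z) = y ⊓ z ⊔ x ⊓ y := by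
    rw [inf_comm, sup_comm, sup_inf_assoc_of_le x inf_le_left]
  calc (x ⊔ y ⊓ z) ⊓ (y ⊔ z ⊓ x) = (z ⊓ x ⊔ y) ⊓ (x ⊔ y ⊓ z) := by rw [inf_comm, sup_comm y]
    _ = z ⊓ x ⊔ y ⊓ (x ⊔ y ⊓ z) := sup_inf_assoc_of_le y (inf_le_right.trans le_sup_left)
    _ = lowerMedian x y z := by rw [hy, lowerMedian]; ac_rfl

theorem inf_sup_sup_inf_sup_eq_upperMedian :
    x ⊓ (y ⊔ z) ⊔ y ⊓ (z ⊔ x) = upperMedian x y z :=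
  sup_inf_inf_sup_inf_eq_lowerMedian (α := αᵒᵈ) x y z

theorem inf_lowerMedian : x ⊓ lowerMedian x y z = x ⊓ y ⊔ x ⊓ z := by
  have h : lowerMedian x y z = x ⊓ y ⊔ x ⊓ z ⊔ y ⊓ z := by
    rw [lowerMedian, inf_comm z x, sup_right_comm]
  rw [h, inf_comm, sup_inf_assoc_of_le _ (sup_le inf_le_left inf_le_left), sup_eq_left]
  exact le_sup_of_le_left (le_inf inf_le_right (inf_le_left.trans inf_le_left))

theorem lowerMedian_ne_upperMedian (h : x ⊓ (y ⊔ z) ≠ x ⊓ y ⊔ x ⊓ z) :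
    lowerMedian x y z ≠ upperMedian x y z := by
  intro hde
  apply h
  rw [← inf_upperMedian, ← hde, inf_lowerMedian]

theorem diamondAtom_eq_sup_inf :
    diamondAtom x y z = (x ⊔ y ⊓ z) ⊓ upperMedian x y z := by
  rw [diamondAtom, sup_comm, ← sup_inf_assoc_of_le x (lowerMedian_le_upperMedian x y z), sup_comm,
    sup_lowerMedian]

theorem diamondAtom_inf_diamondAtom :
    diamondAtom x y z ⊓ diamondAtom y z x = lowerMedian x y z := by
  rw [diamondAtom_eq_sup_inf, diamondAtom_eq_sup_inf, upperMedian_rotate x y z, inf_inf_inf_comm,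
    inf_idem, sup_inf_inf_sup_inf_eq_lowerMedian, inf_eq_left.2 (lowerMedian_le_upperMedian x y z)]

theorem diamondAtom_sup_diamondAtom :
    diamondAtom x y z ⊔ diamondAtom y z x = upperMedian x y z := by
  rw [diamondAtom, diamondAtom, inf_upperMedian, inf_upperMedian, lowerMedian_rotate x y z,
    sup_sup_sup_comm, sup_idem, inf_sup_sup_inf_sup_eq_upperMedian,
    sup_eq_left.2 (lowerMedian_le_upperMedian x y z)]

end Median

namespace M3

theorem sup_def (p q : M3) : p ⊔ q = if p.ble q then q else if q.ble p then p else .top := rfl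

theorem inf_def (p q : M3) : p ⊓ q = if p.ble q then p else if q.ble p then q else .bot := rfl

variable {L : Type*} [Lattice L]

def lift (o a b c i : L) (hab : a ⊓ b = o) (hbc : b ⊓ c = o) (hca : c ⊓ a = o)
    (hab' : a ⊔ b = i) (hbc' : b ⊔ c = i) (hca' : c ⊔ a = i) : LatticeHom M3 L :=
  have hoa : o ≤ a := hab ▸ inf_le_left
  have hob : o ≤ b := hbc ▸ inf_le_left
  have hoc : o ≤ c := hca ▸ inf_le_left
  have hai : a ≤ i := hab' ▸ le_sup_left
  have hbi : b ≤ i := hbc' ▸ le_sup_left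
  have hci : c ≤ i := hca' ▸ le_sup_left
  have hoi : o ≤ i := hoa.trans hai
  { toFun
      | .bot => o | .a => a | .b => b | .c => c | .top => i
    map_sup' := by
      rintro (_ | _ | _ | _ | _) (_ | _ | _ | _ | _) <;>
        simp [sup_def, ble, sup_comm b a, sup_comm c b, sup_comm a c, *]
    map_inf' := by
      rintro (_ | _ | _ | _ | _) (_ | _ | _ | _ | _) <;>
        simp [inf_def, ble, inf_comm b a, inf_comm c b, inf_comm a c, *] }

theorem injective_of_map_bot_ne_map_top (f : LatticeHom M3 L) (hf : f .bot ≠ f .top) :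
    Function.Injective f := by
  -- Push a collapse `f 0 = f x` of an atom `x` through `t ↦ (t ⊔ y) ⊓ (t ⊔ z)`, `y`, `z` the
  -- other two atoms; dually for `f x = f 1`.
  have bot_ne : ∀ x, x ≠ .bot → f .bot ≠ f x := by
    rintro (_ | _ | _ | _ | _) hx h <;> apply hf
    · exact absurd rfl hx
    · exact f.map_inf_congr (f.map_sup_congr_right h .b) (f.map_sup_congr_right h .c)
    · exact f.map_inf_congr (f.map_sup_congr_right h .c) (f.map_sup_congr_right h .a)
    · exact f.map_inf_congr (f.map_sup_congr_right h .a) (f.map_sup_congr_right h .b)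
    · exact h
  have ne_top : ∀ x, x ≠ .top → f x ≠ f .top := by
    rintro (_ | _ | _ | _ | _) hx h <;> apply hf
    · exact h
    · exact f.map_sup_congr (f.map_inf_congr_right h .b) (f.map_inf_congr_right h .c)
    · exact f.map_sup_congr (f.map_inf_congr_right h .c) (f.map_inf_congr_right h .a)
    · exact f.map_sup_congr (f.map_inf_congr_right h .a) (f.map_inf_congr_right h .b)
    · exact absurd rfl hx
  intro p q hfpq
  by_contra hpq
  have h := f.map_inf_eq_map_sup hfpq
  obtain ⟨hinf, hsup⟩ | ⟨hsup, hinf⟩ :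
      (p ⊓ q = .bot ∧ p ⊔ q ≠ .bot) ∨ (p ⊔ q = .top ∧ p ⊓ q ≠ .top) := by
    revert hpq; cases p <;> cases q <;> decide
  · exact bot_ne _ hsup (hinf ▸ h)
  · exact ne_top _ hinf (hsup ▸ h)

theorem exists_injective_of_not_distrib [IsModularLattice L] {x y z : L}
    (h : x ⊓ (y ⊔ z) ≠ x ⊓ y ⊔ x ⊓ z) :
    ∃ f : LatticeHom M3 L, Function.Injective f := by
  refine ⟨lift (lowerMedian x y z) (diamondAtom x y z) (diamondAtom y z x) (diamondAtom z x y)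
    (upperMedian x y z) ?_ ?_ ?_ ?_ ?_ ?_,
    injective_of_map_bot_ne_map_top _ (lowerMedian_ne_upperMedian x y z h)⟩ <;>
  simp only [diamondAtom_inf_diamondAtom, diamondAtom_sup_diamondAtom, lowerMedian_rotate,
    upperMedian_rotate]

end M3

namespace N5

theorem sup_def (p q : N5) : p ⊔ q = if p.ble q then q else if q.ble p then p else .top := rfl

theorem inf_def (p q : N5) : p ⊓ q = if p.ble q then p else if q.ble p then q else .bot := rfl

instance : DecidableLE N5 := fun p q => decEq (p ⊔ q) q

variable {L : Type*} [Lattice L]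

def lift (o v u w i : L) (hvu : v ≤ u) (hv : v ⊓ w = o) (hu : u ⊓ w = o) (hv' : v ⊔ w = i)
    (hu' : u ⊔ w = i) : LatticeHom N5 L :=
  have hov : o ≤ v := hv ▸ inf_le_left
  have how : o ≤ w := hv ▸ inf_le_right
  have hui : u ≤ i := hu' ▸ le_sup_left
  have hwi : w ≤ i := hu' ▸ le_sup_right
  have hou : o ≤ u := hov.trans hvu
  have hvi : v ≤ i := hvu.trans hui
  have hoi : o ≤ i := hou.trans hui
  { toFun
      | .bot => o | .v => v | .u => u | .w => w | .top => i
    map_sup' := by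
      rintro (_ | _ | _ | _ | _) (_ | _ | _ | _ | _) <;> simp [sup_def, ble, sup_comm w, *]
    map_inf' := by
      rintro (_ | _ | _ | _ | _) (_ | _ | _ | _ | _) <;> simp [inf_def, ble, inf_comm w, *] }

theorem injective_of_map_v_ne_map_u (f : LatticeHom N5 L) (hf : f .v ≠ f .u) :
    Function.Injective f := by
  have collapse : ∀ m M : N5, m ≤ .v → .u ≤ M → f m ≠ f M := fun m M hm hM h =>
    hf ((OrderHomClass.mono f).eq_of_eq_of_le h hm (by decide) hM)
  intro p q hfpq
  by_contra hpq
  have h := f.map_inf_eq_map_sup hfpq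
  -- The collapsed interval `[p ⊓ q, p ⊔ q]` either contains `[v, u]` or is moved onto one that
  -- does by a translation `t ↦ (t ⊔ r) ⊓ s` or `t ↦ (t ⊓ s) ⊔ r`.
  obtain ⟨hm, hM⟩ | ⟨hm, hM⟩ | ⟨hm, hM⟩ | ⟨hm, hM⟩ | ⟨hm, hM⟩ :
      (p ⊓ q ≤ .v ∧ .u ≤ p ⊔ q) ∨ (p ⊓ q = .bot ∧ p ⊔ q = .v) ∨ (p ⊓ q = .u ∧ p ⊔ q = .top) ∨
        (p ⊓ q = .bot ∧ p ⊔ q = .w) ∨ (p ⊓ q = .w ∧ p ⊔ q = .top) := by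
    revert hpq; cases p <;> cases q <;> decide
  · exact collapse _ _ hm hM h
  all_goals rw [hm, hM] at h
  · exact collapse .bot .u (by decide) (by decide)
      (f.map_inf_congr_right (f.map_sup_congr_right h .w) .u)
  · exact collapse .v .top (by decide) (by decide)
      (f.map_sup_congr_right (f.map_inf_congr_right h .w) .v)
  · exact collapse .v .top (by decide) (by decide) (f.map_sup_congr_right h .v)
  · exact collapse .bot .u (by decide) (by decide) (f.map_inf_congr_right h .u)

theorem exists_injective_of_not_isModularLattice (h : ¬ IsModularLattice L) :
    ∃ f : LatticeHom N5 L, Function.Injective f := by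
  obtain ⟨x, y, z, hxz, hlt⟩ : ∃ x y z : L, x ≤ z ∧ ¬ (x ⊔ y) ⊓ z ≤ x ⊔ y ⊓ z := by
    by_contra! hmod
    exact h ⟨fun y _ hxz => hmod _ y _ hxz⟩
  have hvu : x ⊔ y ⊓ z ≤ (x ⊔ y) ⊓ z :=
    sup_le (le_inf le_sup_left hxz) (inf_le_inf_right z le_sup_right)
  have hu : (x ⊔ y) ⊓ z ⊓ y = y ⊓ z := by
    rw [inf_right_comm, inf_of_le_right (le_sup_right (a := x))]
  have hv : (x ⊔ y ⊓ z) ⊓ y = y ⊓ z :=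
    le_antisymm ((inf_le_inf_right y hvu).trans_eq hu) (le_inf le_sup_right inf_le_left)
  have hv' : (x ⊔ y ⊓ z) ⊔ y = x ⊔ y := by
    rw [sup_assoc, sup_eq_right.2 (inf_le_left : y ⊓ z ≤ y)]
  have hu' : (x ⊔ y) ⊓ z ⊔ y = x ⊔ y :=
    le_antisymm (sup_le inf_le_left le_sup_right) (hv' ▸ sup_le_sup_right hvu y)
  exact ⟨lift _ _ _ _ _ hvu hv hu hv' hu', injective_of_map_v_ne_map_u _ fun h => hlt h.ge⟩

end N5


theorem not_distributive_iff_pentagon_or_diamond {L : Type*} [Lattice L] :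
    ¬ (∀ x y z : L, x ⊓ (y ⊔ z) = (x ⊓ y) ⊔ (x ⊓ z)) ↔
      (∃ f : LatticeHom N5 L, Function.Injective f) ∨
      (∃ f : LatticeHom M3 L, Function.Injective f) := by
  constructor
  · intro hnd
    by_cases hmod : IsModularLattice L
    · push Not at hnd
      obtain ⟨x, y, z, h⟩ := hnd
      exact Or.inr (M3.exists_injective_of_not_distrib h)
    · exact Or.inl (N5.exists_injective_of_not_isModularLattice hmod)
  · rintro (⟨f, hf⟩ | ⟨f, hf⟩) hd
    · exact absurd (f.inf_sup_left_of_injective hf hd) (by decide)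
    · exact absurd (f.inf_sup_left_of_injective hf hd) (by decide)
end

section
/- Let L be a modular lattice and d, e, f ∈ L. Define p = (d ⊓ e) ⊔ (e ⊓ f) ⊔ (f ⊓ d), q = (d ⊔ e) ⊓ (e ⊔ f) ⊓ (f ⊔ d), u = (d ⊓ q) ⊔ p, v = (e ⊓ q) ⊔ p. Then u ⊓ v = p. -/
/-! Since `p ≤ v`, the modular law gives `u ⊓ v = (d ⊓ q ⊓ v) ⊔ p`, so it suffices that
`d ⊓ v ≤ p`. This holds because `v ≤ e ⊔ (f ⊓ d)` and, by modularity again,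
`d ⊓ (e ⊔ (f ⊓ d)) = (d ⊓ e) ⊔ (f ⊓ d) ≤ p`. -/

section

variable {L : Type*} [Lattice L] [IsModularLattice L]

theorem sup_inf_eq_right_of_inf_le {x p v : L} (hpv : p ≤ v) (hxv : x ⊓ v ≤ p) :
    (x ⊔ p) ⊓ v = p := by
  rw [sup_comm, sup_inf_assoc_of_le x hpv, sup_eq_left.2 hxv]

theorem inf_sup_le_sup_inf_sup_inf {d e f y : L} (hye : y ≤ e) :
    d ⊓ (y ⊔ ((d ⊓ e) ⊔ (e ⊓ f) ⊔ (f ⊓ d))) ≤ (d ⊓ e) ⊔ (e ⊓ f) ⊔ (f ⊓ d) := by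
  have hle : y ⊔ ((d ⊓ e) ⊔ (e ⊓ f) ⊔ (f ⊓ d)) ≤ e ⊔ (f ⊓ d) :=
    sup_le (le_sup_of_le_left hye) <|
      sup_le (sup_le (le_sup_of_le_left inf_le_right) (le_sup_of_le_left inf_le_left)) le_sup_right
  calc d ⊓ (y ⊔ ((d ⊓ e) ⊔ (e ⊓ f) ⊔ (f ⊓ d)))
      ≤ d ⊓ (e ⊔ (f ⊓ d)) := inf_le_inf_left d hle
    _ = (d ⊓ e) ⊔ (f ⊓ d) := (inf_sup_assoc_of_le e inf_le_right).symm
    _ ≤ (d ⊓ e) ⊔ (e ⊓ f) ⊔ (f ⊓ d) := sup_le_sup_right le_sup_left _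

end

theorem inf_uv_eq_p {L : Type*} [Lattice L] [IsModularLattice L] (d e f : L) :
    let p := (d ⊓ e) ⊔ (e ⊓ f) ⊔ (f ⊓ d)
    let q := (d ⊔ e) ⊓ (e ⊔ f) ⊓ (f ⊔ d)
    let u := (d ⊓ q) ⊔ p
    let v := (e ⊓ q) ⊔ p
    u ⊓ v = p := by
  intro p q u v
  have hdv : d ⊓ v ≤ p := inf_sup_le_sup_inf_sup_inf inf_le_left
  exact sup_inf_eq_right_of_inf_le le_sup_right
    ((inf_le_inf_right v inf_le_left).trans hdv)
end

section
/- Let L be a modular lattice and d, e, f ∈ L. With p = (d ⊓ e) ⊔ (e ⊓ f) ⊔ (f ⊓ d), q = (d ⊔ e) ⊓ (e ⊔ f) ⊓ (f ⊔ d), u = (d ⊓ q) ⊔ p, v = (e ⊓ q) ⊔ p, we have u ⊔ v = q. -/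
/-! By modularity `q = d ⊓ (e ⊔ f) ⊔ e ⊓ (f ⊔ d)`; both joinands lie below `d ⊓ q ⊔ e ⊓ q ≤ u ⊔ v`,
and conversely `u ⊔ v ≤ q` because `p ≤ q` holds in every lattice. -/

theorem inf_sup_inf_sup_inf_le_sup_inf_sup_inf_sup {L : Type*} [Lattice L] (a b c : L) :
    a ⊓ b ⊔ b ⊓ c ⊔ c ⊓ a ≤ (a ⊔ b) ⊓ (b ⊔ c) ⊓ (c ⊔ a) :=
  sup_le (sup_le
    (le_inf (le_inf (inf_le_left.trans le_sup_left) (inf_le_right.trans le_sup_left))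
      (inf_le_left.trans le_sup_right))
    (le_inf (le_inf (inf_le_left.trans le_sup_right) (inf_le_left.trans le_sup_left))
      (inf_le_right.trans le_sup_left)))
    (le_inf (le_inf (inf_le_right.trans le_sup_left) (inf_le_left.trans le_sup_right))
      (inf_le_left.trans le_sup_left))

theorem sup_inf_sup_inf_sup_eq_inf_sup_inf {L : Type*} [Lattice L] [IsModularLattice L]
    (a b c : L) : (a ⊔ b) ⊓ (b ⊔ c) ⊓ (c ⊔ a) = a ⊓ (b ⊔ c) ⊔ b ⊓ (c ⊔ a) := by
  have hab : (a ⊔ b) ⊓ (b ⊔ c) = a ⊓ (b ⊔ c) ⊔ b := by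
    rw [sup_comm a b, sup_inf_assoc_of_le a le_sup_left, sup_comm]
  rw [hab, sup_inf_assoc_of_le b (inf_le_left.trans le_sup_right)]

theorem sup_uv_eq_q {L : Type*} [Lattice L] [IsModularLattice L] (d e f : L) :
    let p := (d ⊓ e) ⊔ (e ⊓ f) ⊔ (f ⊓ d)
    let q := (d ⊔ e) ⊓ (e ⊔ f) ⊓ (f ⊔ d)
    let u := (d ⊓ q) ⊔ p
    let v := (e ⊓ q) ⊔ p
    u ⊔ v = q := by
  intro p q u v
  have hpq : p ≤ q := inf_sup_inf_sup_inf_le_sup_inf_sup_inf_sup d e f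
  have hq : q = d ⊓ (e ⊔ f) ⊔ e ⊓ (f ⊔ d) := sup_inf_sup_inf_sup_eq_inf_sup_inf d e f
  apply le_antisymm
  · exact sup_le (sup_le inf_le_right hpq) (sup_le inf_le_right hpq)
  · calc q = d ⊓ (e ⊔ f) ⊔ e ⊓ (f ⊔ d) := hq
      _ ≤ d ⊓ q ⊔ e ⊓ q := by
        refine sup_le_sup (le_inf inf_le_left ?_) (le_inf inf_le_left ?_) <;> rw [hq]
        exacts [le_sup_left, le_sup_right]
      _ ≤ u ⊔ v := sup_le_sup le_sup_left le_sup_left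
end
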